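/- Let X ∈ F with γ_max(X) > 0. Then X − D(X)/γ_max(X) ⪰ O and I − X + D(X)/γ_max(X) ⪰ O; that is, X − D(X)/γ_max(X) ∈ F. -/

import Mathlib

set_option autoImplicit false

open Matrix Set Filter

attribute [local instance] Matrix.normedAddCommGroup Matrix.normedSpace

namespace BoxSDP

open scoped Classical

/-- Trace inner product `⟨A|B⟩ = Trace(Aᵀ B)`. -/
noncomputable def mip {m k : Type*} [Fintype m] [Fintype k]
    (A B : Matrix m k ℝ) : ℝ :=
  (Aᵀ * B).trace

/-- Frobenius norm `‖A‖_F = √⟨A|A⟩`. -/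
noncomputable def fnorm {m k : Type*} [Fintype m] [Fintype k]
    (A : Matrix m k ℝ) : ℝ :=
  Real.sqrt (mip A A)

/-- The feasible set `F = {X : O ⪯ X ⪯ I}` (membership forces symmetry). -/
def Feas (n : ℕ) : Set (Matrix (Fin n) (Fin n) ℝ) :=
  {X | X.PosSemidef ∧ (1 - X).PosSemidef}

/-- Square root of a positive semidefinite matrix (junk value `0` otherwise);
agrees with `A^{1/2} = Q K^{1/2} Qᵀ` on positive semidefinite matrices. -/
noncomputable def psqrt {m : Type*} [Fintype m] [DecidableEq m]
    (A : Matrix m m ℝ) : Matrix m m ℝ :=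
  if h : A.PosSemidef then
    (h.1.eigenvectorUnitary : Matrix m m ℝ) * diagonal ((↑) ∘ (√·) ∘ h.1.eigenvalues) *
      (star h.1.eigenvectorUnitary : Matrix m m ℝ) else 0

/-- Fourth root `A^{1/4}` of a positive semidefinite matrix. -/
noncomputable def proot4 {m : Type*} [Fintype m] [DecidableEq m]
    (A : Matrix m m ℝ) : Matrix m m ℝ :=
  psqrt (psqrt A)

/-- The 2-norm of a symmetric matrix: its largest absolute eigenvalue. -/
noncomputable def norm2 {m : Type*} [Fintype m] [DecidableEq m]
    (A : Matrix m m ℝ) : ℝ :=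
  if h : A.IsHermitian then sSup (Set.range fun i => |h.eigenvalues i|) else 0

/-- The linear functional `H ↦ ⟨G|H⟩`, as a continuous linear map; a function
`f` has gradient matrix `G` at `X` iff `HasFDerivAt f (gradCLM G) X`. -/
noncomputable def gradCLM {n : ℕ} (G : Matrix (Fin n) (Fin n) ℝ) :
    Matrix (Fin n) (Fin n) ℝ →L[ℝ] ℝ :=
  LinearMap.toContinuousLinearMap
    { toFun := fun H => mip G H
      map_add' := fun x y => by
        simp [mip, Matrix.mul_add]
      map_smul' := fun c x => by
        simp [mip, Matrix.mul_smul] }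

/-- The Hessian bilinear form `⟨A | ∇²f(X) | B⟩` induced by the derivative
`hessOp` of the gradient map. -/
noncomputable def hform {n : ℕ}
    (hessOp : Matrix (Fin n) (Fin n) ℝ →L[ℝ] Matrix (Fin n) (Fin n) ℝ)
    (A B : Matrix (Fin n) (Fin n) ℝ) : ℝ :=
  mip A (hessOp B)

/-- `underline-f`: the minimum of `⟨G | Y − X̂⟩` over `Y ∈ F`. -/
noncomputable def underf {n : ℕ} (G Xh : Matrix (Fin n) (Fin n) ℝ) : ℝ :=
  sInf ((fun Y => mip G (Y - Xh)) '' Feas n)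

/-- First-order optimality condition at `Xs` for gradient matrix `G`. -/
def FirstOrderOpt {n : ℕ} (G Xs : Matrix (Fin n) (Fin n) ℝ) : Prop :=
  ∀ X ∈ Feas n, 0 ≤ mip G (X - Xs)

/-- A fixed eigenvalue decomposition `G = P Γ Pᵀ` of a symmetric matrix `G`,
with eigenvalues in descending order, split into the block `Pp, gp` of
positive eigenvalues and the block `Pm, gm` of nonpositive eigenvalues. -/
structure SpecDecomp (n : ℕ) (G : Matrix (Fin n) (Fin n) ℝ) where
  np : ℕ
  nm : ℕ
  hdim : np + nm = n
  Pp : Matrix (Fin n) (Fin np) ℝ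
  Pm : Matrix (Fin n) (Fin nm) ℝ
  gp : Fin np → ℝ
  gm : Fin nm → ℝ
  hgp_pos : ∀ i, 0 < gp i
  hgm_nonpos : ∀ j, gm j ≤ 0
  hgp_anti : ∀ i j : Fin np, i ≤ j → gp j ≤ gp i
  hgm_anti : ∀ i j : Fin nm, i ≤ j → gm j ≤ gm i
  hPp_orth : Ppᵀ * Pp = 1
  hPm_orth : Pmᵀ * Pm = 1
  hPpPm : Ppᵀ * Pm = 0
  hPPT : Pp * Ppᵀ + Pm * Pmᵀ = 1
  hG : G = Pp * Matrix.diagonal gp * Ppᵀ + Pm * Matrix.diagonal gm * Pmᵀ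

namespace SpecDecomp

variable {n : ℕ} {G : Matrix (Fin n) (Fin n) ℝ}

/-- `V₊(X) = P₊ᵀ X P₊`. -/
def Vp (sd : SpecDecomp n G) (X : Matrix (Fin n) (Fin n) ℝ) :
    Matrix (Fin sd.np) (Fin sd.np) ℝ :=
  sd.Ppᵀ * X * sd.Pp

/-- `V₋(X) = P₋ᵀ (I − X) P₋`. -/
def Vm (sd : SpecDecomp n G) (X : Matrix (Fin n) (Fin n) ℝ) :
    Matrix (Fin sd.nm) (Fin sd.nm) ℝ :=
  sd.Pmᵀ * (1 - X) * sd.Pm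

/-- The search direction `D(X) = P M Pᵀ` with blocks
`M₁₁ = V₊^{1/2} Γ₊ V₊^{1/2}`, `M₁₂ = γ_max P₊ᵀ X P₋`,
`M₂₁ = γ_max P₋ᵀ X P₊`, `M₂₂ = V₋^{1/2} Γ₋ V₋^{1/2}`. -/
noncomputable def Dmat (sd : SpecDecomp n G) (X : Matrix (Fin n) (Fin n) ℝ) :
    Matrix (Fin n) (Fin n) ℝ :=
  sd.Pp * (psqrt (sd.Vp X) * Matrix.diagonal sd.gp * psqrt (sd.Vp X)) * sd.Ppᵀ
    + norm2 G • (sd.Pp * (sd.Ppᵀ * X * sd.Pm) * sd.Pmᵀ)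
    + norm2 G • (sd.Pm * (sd.Pmᵀ * X * sd.Pp) * sd.Ppᵀ)
    + sd.Pm * (psqrt (sd.Vm X) * Matrix.diagonal sd.gm * psqrt (sd.Vm X)) * sd.Pmᵀ

/-- `N(X) = ⟨G | D(X)⟩`. -/
noncomputable def Nval (sd : SpecDecomp n G) (X : Matrix (Fin n) (Fin n) ℝ) : ℝ :=
  mip G (sd.Dmat X)

end SpecDecomp

/-!
In the eigenbasis of `∇f(X)` the off-diagonal blocks of `D(X)/γ_max` are exactly those of `X`, so
`X - D(X)/γ_max` is block diagonal, with diagonal blocks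
`V₊ - V₊^{1/2} (Γ₊/γ_max) V₊^{1/2}` and `(I - V₋) - V₋^{1/2} (Γ₋/γ_max) V₋^{1/2}`.
Since `O ⪯ V₊, V₋ ⪯ I` and the entries of `Γ₊/γ_max` lie in `[0, 1]` and those of `Γ₋/γ_max` in
`[-1, 0]`, the identity `V - V^{1/2} Δ V^{1/2} = V^{1/2} (I - Δ) V^{1/2}` shows that both blocks
lie between `O` and `I` (for the second one, apply it to `I` minus the block).
-/

open scoped MatrixOrder

lemma Feas_eq_Icc (n : ℕ) : Feas n = Icc 0 1 := by
  ext X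
  simp [Feas, le_iff]

lemma one_sub_mem_Icc {α : Type*} [AddCommGroup α] [One α] [PartialOrder α] [IsOrderedAddMonoid α]
    {a : α} (ha : a ∈ Icc 0 1) : 1 - a ∈ Icc 0 1 :=
  ⟨sub_nonneg.2 ha.2, sub_le_self _ ha.1⟩

section SqrtConjugation

variable {m : Type*} [Fintype m] [DecidableEq m]

lemma psqrt_eq_sqrt {A : Matrix m m ℝ} (hA : A.PosSemidef) : psqrt A = CFC.sqrt A := by
  rw [psqrt, dif_pos hA, CFC.sqrt_eq_cfc, cfc_nnreal_eq_real _ A, hA.1.cfc_eq, IsHermitian.cfc,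
    Unitary.conjStarAlgAut_apply]
  congr 3
  funext i
  simp [max_eq_left (hA.eigenvalues_nonneg i)]

lemma sqrt_mul_diagonal_mul_sqrt_nonneg (A : Matrix m m ℝ) {d : m → ℝ} (hd : ∀ i, 0 ≤ d i) :
    0 ≤ CFC.sqrt A * Matrix.diagonal d * CFC.sqrt A := by
  have h := (posSemidef_diagonal_iff.mpr hd).mul_mul_conjTranspose_same (CFC.sqrt A)
  rw [← star_eq_conjTranspose, (CFC.sqrt_nonneg A).isSelfAdjoint.star_eq] at h
  exact h.nonneg

lemma sub_sqrt_mul_diagonal_mul_sqrt_mem_Icc {A : Matrix m m ℝ} (hA : A ∈ Icc 0 1) {d : m → ℝ}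
    (hd : ∀ i, d i ∈ Icc 0 1) : A - CFC.sqrt A * Matrix.diagonal d * CFC.sqrt A ∈ Icc 0 1 := by
  have hS := sqrt_mul_diagonal_mul_sqrt_nonneg A fun i => (hd i).1
  refine ⟨?_, (sub_le_self _ hS).trans hA.2⟩
  have h : CFC.sqrt A * Matrix.diagonal (fun i => 1 - d i) * CFC.sqrt A =
      A - CFC.sqrt A * Matrix.diagonal d * CFC.sqrt A := by
    rw [← diagonal_sub, diagonal_one, Matrix.mul_sub, Matrix.sub_mul, Matrix.mul_one,
      CFC.sqrt_mul_sqrt_self A hA.1]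
  exact h ▸ sqrt_mul_diagonal_mul_sqrt_nonneg A fun i => sub_nonneg.2 (hd i).2

lemma one_sub_sub_sqrt_mul_diagonal_mul_sqrt_mem_Icc {W : Matrix m m ℝ} (hW : W ∈ Icc 0 1)
    {d : m → ℝ} (hd : ∀ i, d i ∈ Icc (-1) 0) :
    1 - W - CFC.sqrt W * Matrix.diagonal d * CFC.sqrt W ∈ Icc 0 1 := by
  have h := one_sub_mem_Icc <| sub_sqrt_mul_diagonal_mul_sqrt_mem_Icc hW (d := fun i => -d i)
    fun i => ⟨neg_nonneg.2 (hd i).2, neg_le.1 (hd i).1⟩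
  rwa [← Matrix.diagonal_neg, Matrix.mul_neg, Matrix.neg_mul, sub_neg_eq_add, ← sub_sub] at h

end SqrtConjugation

section Conjugation

variable {m k k' : Type*} [Fintype m] [Fintype k] [Fintype k']

lemma mul_mul_transpose_nonneg {A : Matrix k k ℝ} (hA : 0 ≤ A) (P : Matrix m k ℝ) :
    0 ≤ P * A * Pᵀ := by
  simpa [conjTranspose_eq_transpose_of_trivial] using
    (hA.posSemidef.mul_mul_conjTranspose_same P).nonneg

lemma transpose_mul_mul_mem_Icc [DecidableEq m] [DecidableEq k] {P : Matrix m k ℝ}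
    (hP : Pᵀ * P = 1) {X : Matrix m m ℝ} (hX : X ∈ Icc 0 1) : Pᵀ * X * P ∈ Icc 0 1 := by
  refine ⟨by simpa using mul_mul_transpose_nonneg hX.1 Pᵀ, sub_nonneg.1 ?_⟩
  have h : Pᵀ * (1 - X) * P = 1 - Pᵀ * X * P := by
    rw [Matrix.mul_sub, Matrix.sub_mul, Matrix.mul_one, hP]
  simpa [h] using mul_mul_transpose_nonneg (sub_nonneg.2 hX.2) Pᵀ

lemma mul_mul_transpose_add_mem_Icc [DecidableEq m] [DecidableEq k] [DecidableEq k']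
    {P₁ : Matrix m k ℝ} {P₂ : Matrix m k' ℝ} (hP : P₁ * P₁ᵀ + P₂ * P₂ᵀ = 1)
    {A : Matrix k k ℝ} {B : Matrix k' k' ℝ} (hA : A ∈ Icc 0 1) (hB : B ∈ Icc 0 1) :
    P₁ * A * P₁ᵀ + P₂ * B * P₂ᵀ ∈ Icc 0 1 := by
  refine ⟨add_nonneg (mul_mul_transpose_nonneg hA.1 P₁) (mul_mul_transpose_nonneg hB.1 P₂),
    sub_nonneg.1 ?_⟩
  have h : 1 - (P₁ * A * P₁ᵀ + P₂ * B * P₂ᵀ) = P₁ * (1 - A) * P₁ᵀ + P₂ * (1 - B) * P₂ᵀ := by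
    nth_rewrite 1 [← hP]
    simp only [Matrix.mul_sub, Matrix.sub_mul, Matrix.mul_one]
    abel
  rw [h]
  exact add_nonneg (mul_mul_transpose_nonneg (sub_nonneg.2 hA.2) P₁)
    (mul_mul_transpose_nonneg (sub_nonneg.2 hB.2) P₂)

end Conjugation

lemma abs_le_norm2_of_mulVec_eq_smul {m : Type*} [Fintype m] [DecidableEq m]
    {G : Matrix m m ℝ} (hG : G.IsHermitian) {v : m → ℝ} (hv : v ≠ 0) {c : ℝ}
    (hc : G *ᵥ v = c • v) : |c| ≤ norm2 G := by
  have hspec : c ∈ spectrum ℝ G := by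
    rw [← Matrix.spectrum_toLin', ← Module.End.hasEigenvalue_iff_mem_spectrum]
    exact Module.End.hasEigenvalue_of_hasEigenvector
      ⟨Module.End.mem_eigenspace_iff.mpr (by simpa using hc), hv⟩
  obtain ⟨k, rfl⟩ := hG.spectrum_real_eq_range_eigenvalues ▸ hspec
  rw [norm2, dif_pos hG]
  exact le_csSup (Set.finite_range _).bddAbove ⟨k, rfl⟩

lemma abs_le_norm2_of_mul_eq_mul_diagonal {m k : Type*} [Fintype m] [DecidableEq m] [Fintype k]
    [DecidableEq k] {G : Matrix m m ℝ} (hG : G.IsHermitian) {P : Matrix m k ℝ} {g : k → ℝ}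
    (hP : Pᵀ * P = 1) (hGP : G * P = P * Matrix.diagonal g) (i : k) : |g i| ≤ norm2 G := by
  refine abs_le_norm2_of_mulVec_eq_smul hG (v := P *ᵥ Pi.single i 1) (fun h0 => ?_) ?_
  · have h := congrArg (Pᵀ *ᵥ ·) h0
    rw [mulVec_mulVec, hP, one_mulVec, mulVec_zero] at h
    simpa using congrFun h i
  · rw [mulVec_mulVec, hGP, ← mulVec_mulVec, mulVec_single, ← mulVec_smul]
    congr 1
    ext j
    simp [Pi.single_apply]

namespace SpecDecomp

variable {n : ℕ} {G : Matrix (Fin n) (Fin n) ℝ}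

lemma isHermitian (sd : SpecDecomp n G) : G.IsHermitian := by
  rw [IsHermitian, conjTranspose_eq_transpose_of_trivial, sd.hG]
  simp [transpose_mul, Matrix.mul_assoc]

variable (sd : SpecDecomp n G)

lemma transpose_Pm_mul_Pp : sd.Pmᵀ * sd.Pp = 0 := by
  simpa [transpose_mul] using congrArg transpose sd.hPpPm

lemma mul_Pp : G * sd.Pp = sd.Pp * Matrix.diagonal sd.gp := by
  refine (congrArg (· * sd.Pp) sd.hG).trans ?_
  simp [Matrix.add_mul, Matrix.mul_assoc, sd.hPp_orth, sd.transpose_Pm_mul_Pp]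

lemma mul_Pm : G * sd.Pm = sd.Pm * Matrix.diagonal sd.gm := by
  refine (congrArg (· * sd.Pm) sd.hG).trans ?_
  simp [Matrix.add_mul, Matrix.mul_assoc, sd.hPm_orth, sd.hPpPm]

lemma inv_norm2_smul_gp_mem_Icc (hγ : 0 < norm2 G) (i : Fin sd.np) :
    ((norm2 G)⁻¹ • sd.gp) i ∈ Icc 0 1 :=
  ⟨mul_nonneg (inv_nonneg.2 hγ.le) (sd.hgp_pos i).le, inv_mul_le_one_of_le₀
    ((le_abs_self _).trans (abs_le_norm2_of_mul_eq_mul_diagonal sd.isHermitian sd.hPp_orth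
      sd.mul_Pp i)) hγ.le⟩

lemma inv_norm2_smul_gm_mem_Icc (hγ : 0 < norm2 G) (j : Fin sd.nm) :
    ((norm2 G)⁻¹ • sd.gm) j ∈ Icc (-1) 0 := by
  have hgm := neg_le_of_abs_le
    (abs_le_norm2_of_mul_eq_mul_diagonal sd.isHermitian sd.hPm_orth sd.mul_Pm j)
  refine ⟨?_, mul_nonpos_of_nonneg_of_nonpos (inv_nonneg.2 hγ.le) (sd.hgm_nonpos j)⟩
  rw [Pi.smul_apply, smul_eq_mul, le_inv_mul_iff₀ hγ]
  linarith

lemma eq_blocks (X : Matrix (Fin n) (Fin n) ℝ) :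
    X = sd.Pp * (sd.Ppᵀ * X * sd.Pp) * sd.Ppᵀ + sd.Pp * (sd.Ppᵀ * X * sd.Pm) * sd.Pmᵀ
      + sd.Pm * (sd.Pmᵀ * X * sd.Pp) * sd.Ppᵀ + sd.Pm * (sd.Pmᵀ * X * sd.Pm) * sd.Pmᵀ := by
  have h : (sd.Pp * sd.Ppᵀ + sd.Pm * sd.Pmᵀ) * X * (sd.Pp * sd.Ppᵀ + sd.Pm * sd.Pmᵀ) = X := by
    rw [sd.hPPT, Matrix.one_mul, Matrix.mul_one]
  conv_lhs => rw [← h]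
  simp only [Matrix.add_mul, Matrix.mul_add, Matrix.mul_assoc]
  abel

lemma one_sub_Vm (X : Matrix (Fin n) (Fin n) ℝ) : 1 - sd.Vm X = sd.Pmᵀ * X * sd.Pm := by
  rw [Vm, Matrix.mul_sub, Matrix.sub_mul, Matrix.mul_one, sd.hPm_orth, sub_sub_cancel]

lemma sub_inv_smul_Dmat (hγ : norm2 G ≠ 0) (X : Matrix (Fin n) (Fin n) ℝ) :
    X - (norm2 G)⁻¹ • sd.Dmat X =
      sd.Pp * (sd.Vp X - psqrt (sd.Vp X) * Matrix.diagonal ((norm2 G)⁻¹ • sd.gp) *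
        psqrt (sd.Vp X)) * sd.Ppᵀ
      + sd.Pm * (1 - sd.Vm X - psqrt (sd.Vm X) * Matrix.diagonal ((norm2 G)⁻¹ • sd.gm) *
        psqrt (sd.Vm X)) * sd.Pmᵀ := by
  nth_rewrite 1 [sd.eq_blocks X]
  rw [sd.one_sub_Vm, Dmat]
  simp only [Vp, diagonal_smul, smul_add, smul_smul, inv_mul_cancel₀ hγ, one_smul,
    Matrix.mul_smul, Matrix.smul_mul, Matrix.mul_sub, Matrix.sub_mul]
  abel

end SpecDecomp

theorem step_by_gammaMax_mem_Feas_general {n : ℕ}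
    (grad : Matrix (Fin n) (Fin n) ℝ → Matrix (Fin n) (Fin n) ℝ)
    (X : Matrix (Fin n) (Fin n) ℝ) (hX : X ∈ Feas n)
    (sd : SpecDecomp n (grad X))
    (hγ : 0 < norm2 (grad X)) :
    (X - (norm2 (grad X))⁻¹ • sd.Dmat X).PosSemidef ∧
      (1 - X + (norm2 (grad X))⁻¹ • sd.Dmat X).PosSemidef ∧
      X - (norm2 (grad X))⁻¹ • sd.Dmat X ∈ Feas n := by
  rw [Feas_eq_Icc] at hX ⊢
  have hVp : sd.Vp X ∈ Icc 0 1 := transpose_mul_mul_mem_Icc sd.hPp_orth hX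
  have hVm : sd.Vm X ∈ Icc 0 1 := transpose_mul_mul_mem_Icc sd.hPm_orth (one_sub_mem_Icc hX)
  have hY : X - (norm2 (grad X))⁻¹ • sd.Dmat X ∈ Icc 0 1 := by
    rw [sd.sub_inv_smul_Dmat hγ.ne', psqrt_eq_sqrt hVp.1.posSemidef,
      psqrt_eq_sqrt hVm.1.posSemidef]
    exact mul_mul_transpose_add_mem_Icc sd.hPPT
      (sub_sqrt_mul_diagonal_mul_sqrt_mem_Icc hVp (sd.inv_norm2_smul_gp_mem_Icc hγ))
      (one_sub_sub_sqrt_mul_diagonal_mul_sqrt_mem_Icc hVm (sd.inv_norm2_smul_gm_mem_Icc hγ))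
  refine ⟨hY.1.posSemidef, ?_, hY⟩
  rw [sub_add]
  exact hY.2

theorem step_by_gammaMax_mem_Feas {n : ℕ}
    (f : Matrix (Fin n) (Fin n) ℝ → ℝ)
    (grad : Matrix (Fin n) (Fin n) ℝ → Matrix (Fin n) (Fin n) ℝ)
    (hgradsym : ∀ X ∈ Feas n, (grad X).IsSymm)
    (hgrad : ∀ X ∈ Feas n, HasFDerivAt f (gradCLM (grad X)) X)
    (X : Matrix (Fin n) (Fin n) ℝ) (hX : X ∈ Feas n)
    (sd : SpecDecomp n (grad X))
    (hγ : 0 < norm2 (grad X)) :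
    (X - (norm2 (grad X))⁻¹ • sd.Dmat X).PosSemidef ∧
      (1 - X + (norm2 (grad X))⁻¹ • sd.Dmat X).PosSemidef ∧
      X - (norm2 (grad X))⁻¹ • sd.Dmat X ∈ Feas n :=
  step_by_gammaMax_mem_Feas_general grad X hX sd hγ

end BoxSDP
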